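/- arXiv:1401.2648 — 2 statements merged into one kernel-verified Lean document; each statement's English description precedes it below -/
import Mathlib

section
/- Let S be a group in which every finitely generated subgroup is a virtual retract. Then in the group P = Multiplicative ℤ × S every finitely generated subgroup is a virtual retract: for every subgroup Γ of P with Γ.FG there exist a finite-index subgroup P₀ of P with Γ ≤ P₀ and a group homomorphism r : P₀ →* P such that r g = g for all g ∈ Γ and r x ∈ Γ for all x ∈ P₀. -/
/-!
Let `Γ ≤ ℤ × S` be finitely generated and let `S₀ ≤ S`, `r : S₀ → S` be a virtual retraction onto
the projection `Γ_S` of `Γ` to `S`. If `Γ` meets the central factor `ℤ × 1` trivially, the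
projection `Γ → Γ_S` is an isomorphism, and composing `r` with its inverse retracts `ℤ × S₀`
onto `Γ`. Otherwise `Γ` contains some `(n, 1)` with `n ≠ 0`, so `Γ` has finite index in
`ℤ × Γ_S`, which is itself a virtual retract via `id × r`; and a finite-index subgroup of a
virtual retract is a virtual retract (pull the retraction back along its preimage of `Γ`).
-/

/-- A subgroup `Γ` of `π` is a virtual retract of `π` if some finite-index subgroup `π₀`
of `π` contains `Γ` and retracts onto it. -/
def IsVirtualRetract {π : Type} [Group π] (Γ : Subgroup π) : Prop :=
  ∃ (π₀ : Subgroup π) (_ : π₀.FiniteIndex) (hle : Γ ≤ π₀) (r : π₀ →* π),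
    (∀ g (hg : g ∈ Γ), r ⟨g, hle hg⟩ = g) ∧ ∀ x : π₀, r x ∈ Γ

open Subgroup

theorem Subgroup.FG.map {G H : Type*} [Group G] [Group H] {Γ : Subgroup G} (hΓ : Γ.FG)
    (f : G →* H) : (Γ.map f).FG := by
  rw [← Group.fg_iff_subgroup_fg] at hΓ ⊢
  rw [← f.domRestrict_range]
  infer_instance

theorem multiplicativeInt_finiteIndex_of_ne_bot {H : Subgroup (Multiplicative ℤ)} (hH : H ≠ ⊥) :
    H.FiniteIndex := by
  obtain ⟨⟨z, hz⟩, hz1⟩ := ne_bot_iff_exists_ne_one.mp hH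
  have hle : (AddSubgroup.zmultiples z.toAdd).toSubgroup ≤ H := by
    rw [← OrderIso.le_symm_apply, AddSubgroup.zmultiples_le]
    exact hz
  have hfin : (AddSubgroup.zmultiples z.toAdd).toSubgroup.FiniteIndex := by
    rw [AddSubgroup.finiteIndex_toSubgroup_iff, AddSubgroup.finiteIndex_iff,
      Int.index_zmultiples]
    simpa using hz1
  exact finiteIndex_of_le hle

section VirtualRetract

variable {π : Type} [Group π]

theorem isVirtualRetract_of_relIndex_range_ne_zero {Γ K : Subgroup π} [K.FiniteIndex]
    (hΓK : Γ ≤ K) (q : K →* π) (hq : ∀ g (hg : g ∈ Γ), q ⟨g, hΓK hg⟩ = g)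
    (hrange : Γ.relIndex q.range ≠ 0) : IsVirtualRetract Γ := by
  let P₀ := (Γ.comap q).map K.subtype
  have hP₀K : P₀ ≤ K := map_subtype_le _
  refine ⟨P₀, ⟨?_⟩, fun g hg => ⟨⟨g, hΓK hg⟩, by simpa [hq g hg], rfl⟩,
    q.comp (inclusion hP₀K), fun g hg => hq g hg, ?_⟩
  · rw [index_map, ker_subtype, sup_bot_eq, range_subtype, index_comap]
    exact mul_ne_zero hrange FiniteIndex.index_ne_zero
  · rintro ⟨_, y, hy, rfl⟩
    exact hy

theorem IsVirtualRetract.of_le_of_relIndex_ne_zero {Γ W : Subgroup π}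
    (hW : IsVirtualRetract W) (hΓW : Γ ≤ W) (hidx : Γ.relIndex W ≠ 0) : IsVirtualRetract Γ := by
  obtain ⟨K, hK, hWK, q, hqW, hqrange⟩ := hW
  have hrange : q.range ≤ W := by
    rintro _ ⟨x, rfl⟩
    exact hqrange x
  exact isVirtualRetract_of_relIndex_range_ne_zero (hΓW.trans hWK) q
    (fun g hg => hqW g (hΓW hg)) (mt (relIndex_eq_zero_of_le_right hrange) hidx)

theorem IsVirtualRetract.of_map {H : Type} [Group H] {Γ : Subgroup π} (f : π →* H)
    (hf : Function.Injective (f.domRestrict Γ)) (hΓ : IsVirtualRetract (Γ.map f)) :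
    IsVirtualRetract Γ := by
  obtain ⟨H₀, hH₀, hle, r, hr, hrΓ⟩ := hΓ
  let e : Γ ≃* Γ.map f :=
    (MonoidHom.ofInjective hf).trans (MulEquiv.subgroupCongr (f.domRestrict_range Γ))
  let K := H₀.comap f
  have hK : K.FiniteIndex := ⟨by
    rw [index_comap]
    exact mt (relIndex_eq_zero_of_le_right le_top) (by rw [relIndex_top_right]; exact hH₀.1)⟩
  refine ⟨K, hK, fun g hg => hle ⟨g, hg, rfl⟩,
    Γ.subtype.comp (e.symm.toMonoidHom.comp ((r.codRestrict _ hrΓ).comp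
      ((f.domRestrict K).codRestrict H₀ fun x => x.2))), fun g hg => ?_, fun x => Subtype.prop _⟩
  have hre : r.codRestrict _ hrΓ ⟨f g, hle ⟨g, hg, rfl⟩⟩ = e ⟨g, hg⟩ :=
    Subtype.ext (hr (f g) ⟨g, hg, rfl⟩)
  change ((e.symm (r.codRestrict _ hrΓ ⟨f g, _⟩)) : π) = g
  rw [hre, e.symm_apply_apply]

theorem IsVirtualRetract.top_prod {A S : Type} [Group A] [Group S] {Δ : Subgroup S}
    (hΔ : IsVirtualRetract Δ) : IsVirtualRetract ((⊤ : Subgroup A).prod Δ) := by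
  obtain ⟨S₀, hS₀, hΔS₀, r, hr, hrΔ⟩ := hΔ
  refine ⟨(⊤ : Subgroup A).prod S₀, ⟨by rw [index_prod, index_top, one_mul]; exact hS₀.1⟩,
    prod_mono le_rfl hΔS₀,
    ((⊤ : Subgroup A).subtype.prodMap r).comp (prodEquiv ⊤ S₀).toMonoidHom, ?_, ?_⟩
  · intro g hg
    exact Prod.ext rfl (hr g.2 (mem_prod.mp hg).2)
  · intro x
    exact mem_prod.mpr ⟨trivial, hrΔ _⟩

end VirtualRetract

section Product

variable {A S : Type*} [Group S]

theorem injective_snd_domRestrict_of_comap_inl_eq_bot [Group A] {Γ : Subgroup (A × S)}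
    (hΓ : Γ.comap (MonoidHom.inl A S) = ⊥) :
    Function.Injective ((MonoidHom.snd A S).domRestrict Γ) := by
  rw [injective_iff_map_eq_one]
  rintro ⟨⟨a, s⟩, hγ⟩ (rfl : s = 1)
  have ha : a ∈ Γ.comap (MonoidHom.inl A S) := hγ
  rw [hΓ, mem_bot] at ha
  subst ha
  rfl

theorem relIndex_top_prod_map_snd_ne_zero [CommGroup A] (Γ : Subgroup (A × S))
    [(Γ.comap (MonoidHom.inl A S)).FiniteIndex] :
    Γ.relIndex ((⊤ : Subgroup A).prod (Γ.map (MonoidHom.snd A S))) ≠ 0 := by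
  -- `φ (a, γ) = (a, 1) * γ`, a homomorphism because `A × 1` is central
  let φ : A × Γ →* A × S :=
    { toFun := fun p => (p.1 * (p.2 : A × S).1, (p.2 : A × S).2)
      map_one' := by simp
      map_mul' := fun p q => by ext <;> simp [mul_mul_mul_comm] }
  have hW : (⊤ : Subgroup A).prod (Γ.map (MonoidHom.snd A S)) ≤ φ.range := by
    rintro ⟨a, s⟩ ⟨-, γ, hγ, rfl⟩
    exact ⟨(a * γ.1⁻¹, ⟨γ, hγ⟩), by ext <;> simp [φ]⟩
  have hle : (Γ.comap (MonoidHom.inl A S)).prod ⊤ ≤ Γ.comap φ := by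
    rintro ⟨a, γ⟩ ⟨ha, -⟩
    have hφ : φ (a, γ) = (a, 1) * (γ : A × S) := by ext <;> simp [φ]
    exact mem_comap.mpr (hφ ▸ mul_mem ha γ.2)
  have hφidx : (Γ.comap φ).index ≠ 0 := by
    refine ne_zero_of_dvd_ne_zero ?_ (index_dvd_of_le hle)
    rw [index_prod, index_top, mul_one]
    exact FiniteIndex.index_ne_zero
  rw [index_comap] at hφidx
  exact mt (relIndex_eq_zero_of_le_right hW) hφidx

end Product

/-- If every finitely generated subgroup of `S` is a virtual retract, then every finitely
generated subgroup of `Multiplicative ℤ × S` is a virtual retract. -/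
theorem virtual_retract_of_product (S : Type) [Group S]
    (hS : ∀ Γ : Subgroup S, Γ.FG → IsVirtualRetract Γ) :
    ∀ Γ : Subgroup (Multiplicative ℤ × S), Γ.FG → IsVirtualRetract Γ := by
  intro Γ hΓ
  have hΓS := hS _ (hΓ.map (MonoidHom.snd _ S))
  by_cases hZ : Γ.comap (MonoidHom.inl _ S) = ⊥
  · exact hΓS.of_map _ (injective_snd_domRestrict_of_comap_inl_eq_bot hZ)
  · have := multiplicativeInt_finiteIndex_of_ne_bot hZ
    exact hΓS.top_prod.of_le_of_relIndex_ne_zero (fun g hg => ⟨trivial, g, hg, rfl⟩)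
      (relIndex_top_prod_map_snd_ne_zero Γ)
end

section
/- Let π be a residually finite group and let Γ be a subgroup of π that is a virtual retract of π, i.e. there exist a finite-index subgroup π₀ of π with Γ ≤ π₀ and a homomorphism r : π₀ →* π with r g = g for all g ∈ Γ and r x ∈ Γ for all x ∈ π₀. Then Γ is separable in π: for every g ∈ π with g ∉ Γ there exist a finite group Q and a group homomorphism f : π →* Q such that f g ∉ f '' (Γ : Set π). -/
/-- If `g` lies outside a finite-index subgroup `H` containing `Γ`, then a finite quotient
separates `g` from `Γ`. -/
lemma separable_of_finiteIndex_aux (π : Type) [Group π] (Γ H : Subgroup π)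
    (hfiH : H.FiniteIndex) (hleH : Γ ≤ H) (g : π) (hgH : g ∉ H) :
    ∃ (Q : Type) (_ : Group Q) (_ : Finite Q) (f : π →* Q),
      f g ∉ f '' (Γ : Set π) := by
  haveI := hfiH
  haveI : H.normalCore.FiniteIndex := Subgroup.finiteIndex_normalCore H
  refine ⟨π ⧸ H.normalCore, inferInstance, inferInstance, QuotientGroup.mk' _, ?_⟩
  rintro ⟨γ, hγ, hγg⟩
  apply hgH
  have h1 : γ⁻¹ * g ∈ H.normalCore := by
    rw [← QuotientGroup.eq]
    exact hγg
  have : g = γ * (γ⁻¹ * g) := by group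
  rw [this]
  exact H.mul_mem (hleH hγ) (H.normalCore_le h1)

/-- If `π` is residually finite and `Γ` is a subgroup of `π` that is a virtual retract of
`π`, then `Γ` is separable in `π`. -/
theorem separable_of_virtual_retract (π : Type) [Group π]
    (hres : ∀ g : π, g ≠ 1 →
      ∃ (Q : Type) (_ : Group Q) (_ : Finite Q) (f : π →* Q), f g ≠ 1)
    (Γ : Subgroup π)
    (π₀ : Subgroup π) (hfi : π₀.FiniteIndex) (hle : Γ ≤ π₀) (r : π₀ →* π)
    (hr : ∀ g (hg : g ∈ Γ), r ⟨g, hle hg⟩ = g) (hrange : ∀ x : π₀, r x ∈ Γ)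
    (g : π) (hg : g ∉ Γ) :
    ∃ (Q : Type) (_ : Group Q) (_ : Finite Q) (f : π →* Q),
      f g ∉ f '' (Γ : Set π) := by
  haveI := hfi
  by_cases hgπ₀ : g ∈ π₀
  · -- g ∈ π₀ \ Γ : use the retraction
    have hne : g * (r ⟨g, hgπ₀⟩)⁻¹ ≠ 1 := by
      intro h
      apply hg
      have : g = r ⟨g, hgπ₀⟩ := by
        have := mul_inv_eq_one.mp h
        exact this
      rw [this]
      exact hrange _
    obtain ⟨Q, _, _, f₀, hf₀⟩ := hres _ hne
    have hf₀' : f₀ g ≠ f₀ (r ⟨g, hgπ₀⟩) := by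
      intro h
      apply hf₀
      rw [map_mul, map_inv, h, mul_inv_cancel]
    -- the homomorphism ψ : π₀ → Q × Q
    set ψ : π₀ →* Q × Q := (f₀.comp π₀.subtype).prod (f₀.comp r) with hψ
    set D : Subgroup (Q × Q) := ((MonoidHom.id Q).prod (MonoidHom.id Q)).range with hD
    set H : Subgroup π := (D.comap ψ).map π₀.subtype with hH
    have hHle : H ≤ π₀ := by
      rw [hH]
      rintro x ⟨y, _, rfl⟩
      exact y.2
    have hΓH : Γ ≤ H := by
      intro γ hγ
      refine ⟨⟨γ, hle hγ⟩, ?_, rfl⟩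
      have hval : ψ ⟨γ, hle hγ⟩ = (f₀ γ, f₀ γ) := by
        simp only [hψ, MonoidHom.prod_apply, MonoidHom.comp_apply, Subgroup.coe_subtype,
          hr γ hγ]
      exact ⟨f₀ γ, by simp [hval]⟩
    have hgH : g ∉ H := by
      rintro ⟨y, hy, hyg⟩
      obtain ⟨q, hq⟩ := hy
      have hy' : y = ⟨g, hgπ₀⟩ := Subtype.ext hyg
      rw [hy'] at hq
      simp only [hψ, MonoidHom.prod_apply, MonoidHom.comp_apply, MonoidHom.id_apply,
        Subgroup.coe_subtype, Prod.mk.injEq] at hq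
      exact hf₀' (hq.1.symm.trans hq.2)
    have hfiH : H.FiniteIndex := by
      constructor
      rw [← Subgroup.relIndex_mul_index hHle]
      apply mul_ne_zero
      · -- relindex H π₀ = (H.subgroupOf π₀).index = (D.comap ψ).index
        have : H.subgroupOf π₀ = D.comap ψ := by
          rw [hH, Subgroup.subgroupOf, Subgroup.comap_map_eq_self_of_injective
            π₀.subtype_injective]
        rw [Subgroup.relIndex, this, Subgroup.index_comap, Subgroup.relIndex]
        haveI : Finite (↥ψ.range ⧸ D.subgroupOf ψ.range) := Quotient.finite _
        exact Subgroup.index_ne_zero_of_finite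
      · exact hfi.index_ne_zero
    exact separable_of_finiteIndex_aux π Γ H hfiH hΓH g hgH
  · exact separable_of_finiteIndex_aux π Γ π₀ hfi hle g hgπ₀
end
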